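/- If a symmetric form satisfies the logarithmic Sobolev inequality ∫ f² log(f²/‖f‖₂²) dπ ≤ C·D(f) for all f in the domain, then it satisfies the Poincaré inequality Var(f) ≤ (C/2)·D(f): applying the log-Sobolev inequality to f = 1 + εg with π(g) = 0 and expanding to second order in ε gives 2Var(g)·ε² + o(ε²) ≤ C·D(g)·ε². -/

import Mathlib

/-!
Apply the log-Sobolev inequality to `f = 1 + ε (g - π g)`. The Dirichlet form of `f` is
`ε² D(g)`. For the entropy, `log N ≤ N - 1` disposes of the normalisation
`N = π f² = 1 + ε² Var g`, and the expansion `(1 + x)² log (1 + x)² = 2x + 3x² + o(x²)` then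
gives `Ent(f²) ≥ 2 ε² Var g + o(ε²)`. Dividing by `ε²` and letting `ε → 0` yields
`2 Var g ≤ C D(g)`.
-/

open Filter Topology Asymptotics Finset

lemma isBigO_log_one_add_sub_taylor :
    (fun y : ℝ => Real.log (1 + y) - (y - y ^ 2 / 2)) =O[𝓝 0] fun y => y ^ 3 := by
  refine IsBigO.of_bound 2 ?_
  filter_upwards [Metric.ball_mem_nhds (0 : ℝ) (by norm_num : (0 : ℝ) < 1 / 2)] with y hy
  rw [Metric.mem_ball, dist_zero_right, Real.norm_eq_abs] at hy
  have h := Real.abs_log_sub_add_sum_range_le (x := -y) (by rw [abs_neg]; linarith) 2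
  rw [abs_neg, sub_neg_eq_add] at h
  rw [Real.norm_eq_abs, Real.norm_eq_abs, abs_pow]
  calc |Real.log (1 + y) - (y - y ^ 2 / 2)|
      = |∑ i ∈ range 2, (-y) ^ (i + 1) / (i + 1) + Real.log (1 + y)| := by
        simp only [sum_range_succ, sum_range_zero]; congr 1; push_cast; ring
    _ ≤ |y| ^ 3 / (1 - |y|) := h
    _ ≤ 2 * |y| ^ 3 := by
        rw [div_le_iff₀ (by linarith)]
        nlinarith [pow_nonneg (abs_nonneg y) 3]

lemma isLittleO_one_add_sq_mul_log_sq :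
    (fun y : ℝ => (1 + y) ^ 2 * Real.log ((1 + y) ^ 2) - 2 * y - 3 * y ^ 2)
      =o[𝓝 0] fun y => y ^ 2 := by
  have hbounded : (fun y : ℝ => 2 * (1 + y) ^ 2) =O[𝓝 0] fun _ => (1 : ℝ) :=
    (Continuous.tendsto (by fun_prop) 0).isBigO_one ℝ
  have hcubic : (fun y : ℝ => 2 * (1 + y) ^ 2 * (Real.log (1 + y) - (y - y ^ 2 / 2)) - y ^ 4)
      =O[𝓝 0] fun y => y ^ 3 := by
    refine IsBigO.sub ?_ (isLittleO_pow_pow (by norm_num)).isBigO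
    simpa using hbounded.mul isBigO_log_one_add_sub_taylor
  refine (hcubic.trans_isLittleO (isLittleO_pow_pow (by norm_num))).congr_left fun y => ?_
  rw [Real.log_pow]
  push_cast
  ring

lemma tendsto_one_add_mul_sq_mul_log_div_sq (c : ℝ) :
    Tendsto (fun ε : ℝ => ((1 + ε * c) ^ 2 * Real.log ((1 + ε * c) ^ 2) - 2 * (ε * c)) / ε ^ 2)
      (𝓝[≠] 0) (𝓝 (3 * c ^ 2)) := by
  have hscale : Tendsto (fun ε : ℝ => ε * c) (𝓝 0) (𝓝 0) := by
    simpa using (continuous_mul_const c).tendsto 0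
  have ho := (isLittleO_one_add_sq_mul_log_sq.comp_tendsto hscale).trans_isBigO
    (isBigO_const_mul_self (c ^ 2) (fun ε : ℝ => ε ^ 2) (𝓝 0) |>.congr_left fun ε => by
      simp only [Function.comp, mul_pow]; ring)
  have := ((ho.tendsto_div_nhds_zero.mono_left
    (nhdsWithin_le_nhds (s := {0}ᶜ))).add_const (3 * c ^ 2))
  rw [zero_add] at this
  refine this.congr' ?_
  filter_upwards [self_mem_nhdsWithin] with ε (hε : ε ≠ 0)
  simp only [Function.comp]
  field_simp
  ring

section FiniteStateSpace

variable {E : Type*} [Fintype E] {π : E → ℝ}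

noncomputable def entropy (π F : E → ℝ) : ℝ :=
  ∑ i, π i * F i * Real.log (F i / ∑ j, π j * F j)

noncomputable def dirichletForm (π : E → ℝ) (q : E → E → ℝ) (f : E → ℝ) : ℝ :=
  (1 / 2) * ∑ i, ∑ j, π i * q i j * (f j - f i) ^ 2

lemma dirichletForm_const_add_mul_sub (q : E → E → ℝ) (g : E → ℝ) (a b s : ℝ) :
    dirichletForm π q (fun i => a + b * (g i - s)) = b ^ 2 * dirichletForm π q g := by
  simp only [dirichletForm, mul_sum]
  congr 1; ext i; congr 1; ext j
  ring

lemma sum_mul_sub_mean_eq_zero (hπ1 : ∑ i, π i = 1) (g : E → ℝ) :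
    ∑ i, π i * (g i - ∑ j, π j * g j) = 0 := by
  simp only [mul_sub, sum_sub_distrib, ← sum_mul, hπ1, one_mul, sub_self]

lemma sum_mul_sq_sub_sq_mean (hπ1 : ∑ i, π i = 1) (g : E → ℝ) :
    ∑ i, π i * g i ^ 2 - (∑ i, π i * g i) ^ 2 = ∑ i, π i * (g i - ∑ j, π j * g j) ^ 2 := by
  have h := sum_mul_sub_mean_eq_zero hπ1 g
  set s := ∑ j, π j * g j
  have hexpand : ∀ i,
      π i * (g i - s) ^ 2 = π i * g i ^ 2 - 2 * s * (π i * (g i - s)) - s ^ 2 * π i :=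
    fun i => by ring
  simp only [hexpand, sum_sub_distrib, ← mul_sum, h, hπ1]
  ring

lemma sum_mul_one_add_mul_sq {g : E → ℝ} (hπ1 : ∑ i, π i = 1) (hg : ∑ i, π i * g i = 0)
    (ε : ℝ) : ∑ i, π i * (1 + ε * g i) ^ 2 = 1 + ε ^ 2 * ∑ i, π i * g i ^ 2 := by
  have hexpand : ∀ i,
      π i * (1 + ε * g i) ^ 2 = π i + 2 * ε * (π i * g i) + ε ^ 2 * (π i * g i ^ 2) :=
    fun i => by ring
  simp only [hexpand, sum_add_distrib, ← mul_sum, hπ1, hg]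
  ring

lemma le_entropy_one_add_mul_sq {g : E → ℝ} (hπ1 : ∑ i, π i = 1)
    (hg : ∑ i, π i * g i = 0) {ε : ℝ} (hf : ∀ i, 1 + ε * g i ≠ 0)
    (hN : 0 < 1 + ε ^ 2 * ∑ i, π i * g i ^ 2) :
    ∑ i, π i * ((1 + ε * g i) ^ 2 * Real.log ((1 + ε * g i) ^ 2) - 2 * (ε * g i))
      - (1 + ε ^ 2 * ∑ i, π i * g i ^ 2) * (ε ^ 2 * ∑ i, π i * g i ^ 2)
      ≤ entropy π fun i => (1 + ε * g i) ^ 2 := by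
  set N := 1 + ε ^ 2 * ∑ i, π i * g i ^ 2
  have hsplit : entropy π (fun i => (1 + ε * g i) ^ 2)
      = ∑ i, π i * ((1 + ε * g i) ^ 2 * Real.log ((1 + ε * g i) ^ 2) - 2 * (ε * g i))
        - N * Real.log N := by
    have hterm : ∀ i, π i * (1 + ε * g i) ^ 2 * Real.log ((1 + ε * g i) ^ 2 / N)
        = π i * ((1 + ε * g i) ^ 2 * Real.log ((1 + ε * g i) ^ 2) - 2 * (ε * g i))
          + 2 * ε * (π i * g i) - π i * (1 + ε * g i) ^ 2 * Real.log N := fun i => by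
      rw [Real.log_div (pow_ne_zero 2 (hf i)) hN.ne']
      ring
    have hsum : ∑ j, π j * (1 + ε * g j) ^ 2 = N := sum_mul_one_add_mul_sq hπ1 hg ε
    simp only [entropy, hsum, hterm, sum_sub_distrib, sum_add_distrib, ← mul_sum, ← sum_mul, hg]
    ring
  have hlog : N * Real.log N ≤ N * (ε ^ 2 * ∑ i, π i * g i ^ 2) := by
    have := Real.log_le_sub_one_of_pos hN
    gcongr
    linarith
  linarith

theorem two_mul_sum_sq_le_of_entropy_le {g : E → ℝ} (hπ1 : ∑ i, π i = 1)
    (hg : ∑ i, π i * g i = 0) (K : ℝ)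
    (hent : ∀ ε, entropy π (fun i => (1 + ε * g i) ^ 2) ≤ ε ^ 2 * K) :
    2 * ∑ i, π i * g i ^ 2 ≤ K := by
  set m := ∑ i, π i * g i ^ 2
  have hlim : Tendsto (fun ε : ℝ =>
      ∑ i, π i * (((1 + ε * g i) ^ 2 * Real.log ((1 + ε * g i) ^ 2) - 2 * (ε * g i)) / ε ^ 2)
        - (1 + ε ^ 2 * m) * m) (𝓝[≠] 0) (𝓝 (2 * m)) := by
    have hmain := tendsto_finsetSum univ fun i _ =>
      (tendsto_one_add_mul_sq_mul_log_div_sq (g i)).const_mul (π i)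
    have hcorr : Tendsto (fun ε : ℝ => (1 + ε ^ 2 * m) * m) (𝓝[≠] 0) (𝓝 m) := by
      have : Continuous fun ε : ℝ => (1 + ε ^ 2 * m) * m := by fun_prop
      simpa using (this.tendsto 0).mono_left nhdsWithin_le_nhds
    convert hmain.sub hcorr using 2
    have h3 : ∑ i, π i * (3 * g i ^ 2) = 3 * m := by
      simp only [m, mul_sum]
      exact sum_congr rfl fun i _ => by ring
    rw [h3]
    ring
  have hpos : ∀ᶠ ε : ℝ in 𝓝 0, (∀ i, 1 + ε * g i ≠ 0) ∧ 0 < 1 + ε ^ 2 * m := by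
    have hf : ∀ᶠ ε : ℝ in 𝓝 0, ∀ i, 1 + ε * g i ≠ 0 := by
      refine eventually_all.2 fun i => ?_
      have : Continuous fun ε : ℝ => 1 + ε * g i := by fun_prop
      exact this.continuousAt.eventually_ne (by simp)
    have hN : ∀ᶠ ε : ℝ in 𝓝 0, 0 < 1 + ε ^ 2 * m := by
      have : Continuous fun ε : ℝ => 1 + ε ^ 2 * m := by fun_prop
      exact continuousAt_const.eventually_lt this.continuousAt (by norm_num)
    exact hf.and hN
  refine le_of_tendsto hlim ?_
  filter_upwards [self_mem_nhdsWithin, nhdsWithin_le_nhds hpos] with ε (hε : ε ≠ 0) ⟨hf, hN⟩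
  have hε2 : 0 < ε ^ 2 := by positivity
  have := (le_entropy_one_add_mul_sq hπ1 hg hf hN).trans (hent ε)
  simp only [← mul_div_assoc, ← sum_div]
  rw [sub_le_iff_le_add, div_le_iff₀ hε2]
  linarith

end FiniteStateSpace

theorem stmt_19_general {E : Type*} [Fintype E]
    (π : E → ℝ) (hπ1 : ∑ i, π i = 1)
    (q : E → E → ℝ)
    (C : ℝ)
    (hLSI : ∀ f : E → ℝ,
      (∑ i, π i * f i ^ 2 * Real.log (f i ^ 2 / (∑ j, π j * f j ^ 2))) ≤
        C * ((1 / 2) * ∑ i, ∑ j, π i * q i j * (f j - f i) ^ 2)) :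
    ∀ g : E → ℝ,
      (∑ i, π i * g i ^ 2) - (∑ i, π i * g i) ^ 2 ≤
        (C / 2) * ((1 / 2) * ∑ i, ∑ j, π i * q i j * (g j - g i) ^ 2) := by
  intro g
  have hLSI_perturbed : ∀ ε : ℝ, entropy π (fun i => (1 + ε * (g i - ∑ j, π j * g j)) ^ 2)
      ≤ ε ^ 2 * (C * dirichletForm π q g) := fun ε => by
    have h := hLSI fun i => 1 + ε * (g i - ∑ j, π j * g j)
    rwa [← dirichletForm, dirichletForm_const_add_mul_sub, mul_left_comm] at h
  have hpoincare := two_mul_sum_sq_le_of_entropy_le hπ1 (sum_mul_sub_mean_eq_zero hπ1 g) _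
    hLSI_perturbed
  rw [sum_mul_sq_sub_sq_mean hπ1, ← dirichletForm]
  linarith

theorem stmt_19 {E : Type*} [Fintype E]
    (π : E → ℝ) (hπpos : ∀ i, 0 < π i) (hπ1 : ∑ i, π i = 1)
    (q : E → E → ℝ) (hqnonneg : ∀ i j, i ≠ j → 0 ≤ q i j)
    (hrev : ∀ i j, π i * q i j = π j * q j i)
    (C : ℝ) (hC : 0 < C)
    (hLSI : ∀ f : E → ℝ,
      (∑ i, π i * f i ^ 2 * Real.log (f i ^ 2 / (∑ j, π j * f j ^ 2))) ≤
        C * ((1 / 2) * ∑ i, ∑ j, π i * q i j * (f j - f i) ^ 2)) :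
    ∀ g : E → ℝ,
      (∑ i, π i * g i ^ 2) - (∑ i, π i * g i) ^ 2 ≤
        (C / 2) * ((1 / 2) * ∑ i, ∑ j, π i * q i j * (g j - g i) ^ 2) :=
  stmt_19_general π hπ1 q C hLSI
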